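/- Deterministic core of Theorem 1 (prediction error bound on the good event). Suppose T ≥ 2, λ = 2 d c0 (log T / T)^{1/4} for some c0 > 0, the vector θ⁰ ∈ ℝ^{Td} has at most m0 + 1 nonzero blocks, each block satisfying ‖θ⁰_i‖ ≤ M_θ, and every entry of Zᵀ U / T has absolute value at most c0 (log T / T)^{1/4}, where U = Y − Zθ⁰. If θ̂ minimizes Q(θ) = (1/T)‖Y − Zθ‖² + λ Σ_{i=1}^T ‖θ_i‖ over ℝ^{Td}, then (1/T)‖Z(θ̂ − θ⁰)‖² ≤ 4 d c0 (log T / T)^{1/4} (m0 + 1) M_θ. -/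

import Mathlib

open MeasureTheory ProbabilityTheory Filter Finset
open scoped ENNReal NNReal Classical Topology

noncomputable section

namespace SB

variable {Ω : Type*} [MeasureSpace Ω]

/-- Euclidean (L²) norm of a finite real vector. -/
def gnorm {n : Type*} [Fintype n] (v : n → ℝ) : ℝ := Real.sqrt (∑ i, v i ^ 2)

/-- Squared Euclidean norm. -/
def sqnorm {n : Type*} [Fintype n] (v : n → ℝ) : ℝ := ∑ i, v i ^ 2

/-- Frobenius norm of a matrix. -/
def matnorm {m n : Type*} [Fintype m] [Fintype n] (A : Matrix m n ℝ) : ℝ :=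
  Real.sqrt (∑ i, ∑ j, A i j ^ 2)

/-- An i.i.d. sequence indexed by ℤ. -/
def IsIID {E : Type*} [MeasurableSpace E] (ξ : ℤ → Ω → E) : Prop :=
  iIndepFun ξ ℙ ∧ ∀ i j : ℤ, IdentDistrib (ξ i) (ξ j) ℙ ℙ

/-- A square 0/1-matrix which is orthogonal (a permutation matrix), as is the
commutation matrix `K`. -/
def IsPermMatrix {n : Type*} [Fintype n] [DecidableEq n] (K : Matrix n n ℝ) : Prop :=
  (∀ i j, K i j = 0 ∨ K i j = 1) ∧ K * K.transpose = 1

/-- Coefficient index set: equation index × regressor index; its cardinality is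
`d = q (r + 2 + s)`. -/
abbrev cIdx (q r s : ℕ) := Fin q × Fin (r + 2 + s)

/-- Assumption 1 of the paper: linear-process errors with i.i.d. innovations having
finite `4 + a` moments, full-rank long-run matrices, one-summable coefficients, a
mean-zero second-order stationary `w` with uniformly bounded `4 + a` moments, and
uniform `4 + ε` moment bounds for the scaled partial sums of `X·u` and `w·u`. -/
def Assumption1 (q r s : ℕ)
    (u : ℕ → Ω → Fin q → ℝ) (ξ : ℕ → Ω → Fin r → ℝ)
    (X : ℕ → Ω → Fin r → ℝ) (w : ℕ → Ω → Fin s → ℝ) : Prop :=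
  ∃ (a : ℝ) (ε : ℤ → Ω → Fin q → ℝ) (e : ℤ → Ω → Fin r → ℝ)
    (C : ℕ → Matrix (Fin q) (Fin q) ℝ) (D : ℕ → Matrix (Fin r) (Fin r) ℝ),
    0 < a ∧
    IsIID (fun t ω => (ε t ω, e t ω)) ∧
    (∫⁻ ω, ENNReal.ofReal ((gnorm (ε 0 ω) + gnorm (e 0 ω)) ^ (4 + a)) ∂ℙ) < ⊤ ∧
    (∀ t ω, u t ω = ∑' j : ℕ, (C j).mulVec (ε ((t : ℤ) - (j : ℤ)) ω)) ∧
    (∀ t ω, ξ t ω = ∑' j : ℕ, (D j).mulVec (e ((t : ℤ) - (j : ℤ)) ω)) ∧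
    (∀ t ω, X (t + 1) ω = X t ω + ξ (t + 1) ω) ∧
    (∑' j : ℕ, C j).rank = q ∧ (∑' j : ℕ, D j).rank = r ∧
    Summable (fun j : ℕ => (j : ℝ) * matnorm (C j)) ∧
    Summable (fun j : ℕ => (j : ℝ) * matnorm (D j)) ∧
    (∀ t l, ∫ ω, w t ω l ∂ℙ = 0) ∧
    (∀ t t' h l l', ∫ ω, w t ω l * w (t + h) ω l' ∂ℙ
        = ∫ ω, w t' ω l * w (t' + h) ω l' ∂ℙ) ∧
    (∃ Mw : ℝ, ∀ t l,
      (∫⁻ ω, ENNReal.ofReal (|w t ω l| ^ (4 + a)) ∂ℙ) ≤ ENNReal.ofReal Mw) ∧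
    (∃ ε' : ℝ, 0 < ε' ∧
      (∃ MX : ℝ, ∀ T : ℕ, 1 ≤ T → ∀ t, 1 ≤ t → t ≤ T → ∀ (l : Fin r) (j : Fin q),
        (∫⁻ ω, ENNReal.ofReal
            (|(1 / (T : ℝ)) * ∑ i ∈ Icc 1 t, X i ω l * u i ω j| ^ (4 + ε')) ∂ℙ)
          ≤ ENNReal.ofReal MX) ∧
      (∃ Mwu : ℝ, ∀ T : ℕ, 1 ≤ T → ∀ t, 1 ≤ t → t ≤ T → ∀ (l : Fin s) (j : Fin q),
        (∫⁻ ω, ENNReal.ofReal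
            (|(1 / (T : ℝ)) * ∑ i ∈ Icc 1 t, w i ω l * u i ω j| ^ (4 + ε')) ∂ℙ)
          ≤ ENNReal.ofReal Mwu))

/-- Assumption 2: the error process is independent of the regressors at all leads
and lags. -/
def Assumption2 (q r s : ℕ) (u : ℕ → Ω → Fin q → ℝ)
    (X : ℕ → Ω → Fin r → ℝ) (w : ℕ → Ω → Fin s → ℝ) : Prop :=
  IndepFun (fun ω (t : ℕ) => u t ω) (fun ω (t : ℕ) => (X t ω, w t ω)) ℙ

/-- Assumption 3: uniformly bounded first moments of the self-normalized squares. -/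
def Assumption3 (r s : ℕ) (X : ℕ → Ω → Fin r → ℝ) (w : ℕ → Ω → Fin s → ℝ) : Prop :=
  ∃ MX Mw : ℝ,
    (∀ t : ℕ, 1 ≤ t → ∀ l, ∫ ω, (t : ℝ) * (X t ω l) ^ 2 /
        (∑ i ∈ Icc 1 t, (X i ω l) ^ 2) ∂ℙ ≤ MX) ∧
    (∀ t : ℕ, 1 ≤ t → ∀ l, ∫ ω, (t : ℝ) * (w t ω l) ^ 2 /
        (∑ i ∈ Icc 1 t, (w i ω l) ^ 2) ∂ℙ ≤ Mw)

/-- The scaled regressor vector `Z_t = (T^{-1/2} X_t', T^{-1} t, 1, w_t')'`. -/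
def Zreg (r s : ℕ) (T : ℕ) (X : ℕ → Ω → Fin r → ℝ) (w : ℕ → Ω → Fin s → ℝ)
    (t : ℕ) (ω : Ω) : Fin (r + 2 + s) → ℝ := fun k =>
  if h1 : (k : ℕ) < r then X t ω ⟨k, h1⟩ / Real.sqrt T
  else if h2 : (k : ℕ) = r then (t : ℝ) / T
  else if h3 : (k : ℕ) = r + 1 then 1
  else w t ω ⟨(k : ℕ) - (r + 2), by have := k.isLt; omega⟩

/-- `Z̄_t = Z_t' ⊗ I_q`, viewed as a `q × d` matrix with column index `(equation,
regressor)`. -/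
def Zbar (q r s T : ℕ) (X : ℕ → Ω → Fin r → ℝ) (w : ℕ → Ω → Fin s → ℝ)
    (t : ℕ) (ω : Ω) : Matrix (Fin q) (cIdx q r s) ℝ :=
  fun i p => if i = p.1 then Zreg r s T X w t ω p.2 else 0

/-- The fitted value `Z̄_t K' (∑_{i ≤ t} θ_i)` of the cumulative structural-break
parametrization at time `t`. -/
def fit (q r s T : ℕ) (X : ℕ → Ω → Fin r → ℝ) (w : ℕ → Ω → Fin s → ℝ)
    (K : Matrix (cIdx q r s) (cIdx q r s) ℝ) (θ : ℕ → cIdx q r s → ℝ)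
    (t : ℕ) (ω : Ω) : Fin q → ℝ :=
  (Zbar q r s T X w t ω).mulVec (K.transpose.mulVec (∑ i ∈ Icc 1 t, θ i))

/-- The structural-break data-generating process with `m0` true breaks at
`t0 1 < ⋯ < t0 m0` (with `t0 0 = 1` and `t0 (m0+1) = T+1`):
`Y_t = Z̄_t K' ∑_{j : t0 j ≤ t} θ0 j + u_t`. -/
def TrueModel (q r s T m0 : ℕ)
    (Y u : ℕ → Ω → Fin q → ℝ) (X : ℕ → Ω → Fin r → ℝ) (w : ℕ → Ω → Fin s → ℝ)
    (K : Matrix (cIdx q r s) (cIdx q r s) ℝ)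
    (t0 : ℕ → ℕ) (θ0 : ℕ → cIdx q r s → ℝ) : Prop :=
  t0 0 = 1 ∧ (∀ j ≤ m0, t0 j < t0 (j + 1)) ∧ t0 (m0 + 1) = T + 1 ∧
  (∀ j ≤ m0, θ0 j ≠ 0) ∧
  ∀ t ω, 1 ≤ t → t ≤ T →
    Y t ω = (Zbar q r s T X w t ω).mulVec
        (K.transpose.mulVec (∑ j ∈ range (m0 + 1), if t0 j ≤ t then θ0 j else 0))
      + u t ω

/-- The blocks of the true stacked coefficient vector `θ⁰(T)`: block `i` is `θ0 j`
if `i = t0 j` and `0` otherwise. -/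
def trueBlocks {ι : Type*} [Fintype ι] (m0 : ℕ) (t0 : ℕ → ℕ) (θ0 : ℕ → ι → ℝ) :
    ℕ → ι → ℝ :=
  fun i => ∑ j ∈ range (m0 + 1), if t0 j = i then θ0 j else 0

/-- The group-LASSO objective
`Q*(θ) = T⁻¹ ∑_{t=1}^T ‖Y_t − Z̄_t K' ∑_{i≤t} θ_i‖² + λ ∑_{i=1}^T ‖θ_i‖`. -/
def Qobj (q r s T : ℕ) (Y : ℕ → Ω → Fin q → ℝ) (X : ℕ → Ω → Fin r → ℝ)
    (w : ℕ → Ω → Fin s → ℝ) (K : Matrix (cIdx q r s) (cIdx q r s) ℝ)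
    (lam : ℝ) (ω : Ω) (θ : ℕ → cIdx q r s → ℝ) : ℝ :=
  (1 / (T : ℝ)) * ∑ t ∈ Icc 1 T, sqnorm (Y t ω - fit q r s T X w K θ t ω)
    + lam * ∑ i ∈ Icc 1 T, gnorm (θ i)

/-- The rate `(log T / T)^{1/4}`. -/
def rate (T : ℕ) : ℝ := (Real.log T / T) ^ ((1 : ℝ) / 4)

/-- The tuning parameter `λ_T = 2 d c₀ (log T / T)^{1/4}`. -/
def lamT (d : ℕ) (c0 : ℝ) (T : ℕ) : ℝ := 2 * d * c0 * rate T

/-- Minimum regime length `min_{1 ≤ j ≤ m0+1} (t0 j − t0 (j−1))`. -/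
def minGap (m0 : ℕ) (t0 : ℕ → ℕ) : ℕ :=
  (Finset.Icc 1 (m0 + 1)).inf' (Finset.nonempty_Icc.mpr (by omega))
    (fun j => t0 j - t0 (j - 1))

/-- Assumption 5: break magnitudes bounded away from `0` and above, and regime
lengths of larger order than `T γ_T`, with `γ_T → 0` and `γ_T / λ_T → ∞`. -/
def Assumption5 {ι : Type*} [Fintype ι] (m0 : ℕ) (t0 : ℕ → ℕ → ℕ)
    (θ0 : ℕ → ℕ → ι → ℝ) (ν Mθ : ℝ) (γ lam : ℕ → ℝ) : Prop :=
  0 < ν ∧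
  (∀ T j, j ≤ m0 → ν ≤ gnorm (θ0 T j) ∧ gnorm (θ0 T j) ≤ Mθ) ∧
  Tendsto γ atTop (𝓝 0) ∧
  Tendsto (fun T => γ T / lam T) atTop atTop ∧
  Tendsto (fun T : ℕ => (minGap m0 (t0 T) : ℝ) / (T * γ T)) atTop atTop

/-- The set `𝒜_T = {2 ≤ i ≤ T : θ̂_i ≠ 0}` of estimated breakpoints. -/
def ATset (T : ℕ) {ι : Type*} (θ : ℕ → ι → ℝ) : Finset ℕ :=
  (Icc 2 T).filter fun i => θ i ≠ 0

/-- One-sided Hausdorff distance `d_H(A, B) = max_{b ∈ B} min_{a ∈ A} |b − a|`,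
with the convention that it equals `1` if either set is empty. -/
def dH (A B : Finset ℕ) : ℝ :=
  if h : A.Nonempty ∧ B.Nonempty then
    B.sup' h.2 fun b => A.inf' h.1 fun a => (Nat.dist b a : ℝ)
  else 1

/-- Segment endpoints for candidate breaks `t 1 < ⋯ < t m`, with the convention
`t 0 = 1`, `t (m+1) = T + 1`. -/
def segpt (T m : ℕ) (t : ℕ → ℕ) (j : ℕ) : ℕ :=
  if j = 0 then 1 else if j ≤ m then t j else T + 1

/-- Sum of squared residuals `S_T(t_1, …, t_m)`, minimized over segment
coefficients. -/
def ST (q r s T : ℕ) (Y : ℕ → Ω → Fin q → ℝ) (X : ℕ → Ω → Fin r → ℝ)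
    (w : ℕ → Ω → Fin s → ℝ) (K : Matrix (cIdx q r s) (cIdx q r s) ℝ)
    (m : ℕ) (t : ℕ → ℕ) (ω : Ω) : ℝ :=
  ⨅ θ : ℕ → cIdx q r s → ℝ,
    ∑ j ∈ range (m + 1),
      ∑ tt ∈ Ico (segpt T m t j) (segpt T m t (j + 1)),
        sqnorm (Y tt ω - (Zbar q r s T X w tt ω).mulVec
          (K.transpose.mulVec (∑ i ∈ range (j + 1), θ i)))

/-- Information criterion `IC(m, t) = S_T(t_1, …, t_m) + m ω_T`. -/
def IC (q r s T : ℕ) (Y : ℕ → Ω → Fin q → ℝ) (X : ℕ → Ω → Fin r → ℝ)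
    (w : ℕ → Ω → Fin s → ℝ) (K : Matrix (cIdx q r s) (cIdx q r s) ℝ)
    (ωpen : ℝ) (m : ℕ) (t : ℕ → ℕ) (ω : Ω) : ℝ :=
  ST q r s T Y X w K m t ω + m * ωpen

/-- A valid second-step candidate: `1 ≤ m ≤ |A|` breakpoints, strictly increasing,
all taken from the first-step set `A`. -/
def ValidCand (A : Finset ℕ) (m : ℕ) (t : ℕ → ℕ) : Prop :=
  1 ≤ m ∧ m ≤ A.card ∧ (∀ j, 1 ≤ j → j ≤ m → t j ∈ A) ∧
    StrictMonoOn t (Set.Icc 1 m)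

end SB

/-!
Comparing the objective at `θ̂` and at `θ⁰` gives the basic inequality
`‖Z(θ̂ - θ⁰)‖²/T ≤ (2/T)⟨ZᵀU, θ̂ - θ⁰⟩ + λ (∑ᵢ ‖θ⁰ᵢ‖ - ∑ᵢ ‖θ̂ᵢ‖)`.
On the good event the cross term is at most `λ ∑ᵢ ‖θ̂ᵢ - θ⁰ᵢ‖`, and the blockwise triangle
inequality `‖θ̂ᵢ - θ⁰ᵢ‖ + ‖θ⁰ᵢ‖ - ‖θ̂ᵢ‖ ≤ 2 ‖θ⁰ᵢ‖` leaves `2λ ∑ᵢ ‖θ⁰ᵢ‖ ≤ 2λ (m0 + 1) Mθ`.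
-/

namespace SB

section GroupLasso

open scoped Matrix

variable {n ι κ : Type*} [Fintype n] [Fintype ι] [Fintype κ]

theorem gnorm_eq_norm_toLp (v : n → ℝ) : gnorm v = ‖WithLp.toLp 2 v‖ := by
  simp [EuclideanSpace.norm_eq, gnorm, sq_abs]

theorem gnorm_sub_le (a b : n → ℝ) : gnorm (a - b) ≤ gnorm a + gnorm b := by
  simpa only [gnorm_eq_norm_toLp, WithLp.toLp_sub] using norm_sub_le _ _

theorem abs_le_gnorm (v : n → ℝ) (l : n) : |v l| ≤ gnorm v := by
  rw [← Real.sqrt_sq_eq_abs]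
  exact Real.sqrt_le_sqrt (single_le_sum (fun i _ => sq_nonneg (v i)) (mem_univ l))

theorem sqnorm_sub (a b : n → ℝ) : sqnorm (a - b) = sqnorm a - 2 * (a ⬝ᵥ b) + sqnorm b := by
  simp only [sqnorm, dotProduct, Pi.sub_apply, mul_sum, ← sum_sub_distrib, ← sum_add_distrib]
  exact sum_congr rfl fun _ _ => by ring

theorem dotProduct_le_mul_sum_abs {g : n → ℝ} {b : ℝ} (hg : ∀ p, |g p| ≤ b) (v : n → ℝ) :
    g ⬝ᵥ v ≤ b * ∑ p, |v p| := by
  rw [mul_sum]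
  refine sum_le_sum fun p _ => ?_
  calc g p * v p ≤ |g p| * |v p| := by rw [← abs_mul]; exact le_abs_self _
    _ ≤ b * |v p| := by gcongr; exact hg p

def groupNorm (θ : ι × κ → ℝ) : ℝ := ∑ i, gnorm fun l => θ (i, l)

theorem groupNorm_sub_le (a b : ι × κ → ℝ) : groupNorm (a - b) ≤ groupNorm a + groupNorm b := by
  unfold groupNorm
  rw [← sum_add_distrib]
  exact sum_le_sum fun i _ => gnorm_sub_le (fun l => a (i, l)) (fun l => b (i, l))

theorem sum_abs_le_card_mul_groupNorm (θ : ι × κ → ℝ) :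
    ∑ p, |θ p| ≤ Fintype.card κ * groupNorm θ := by
  rw [Fintype.sum_prod_type, groupNorm, mul_sum]
  refine sum_le_sum fun i _ => ?_
  calc ∑ l, |θ (i, l)| ≤ ∑ _l : κ, gnorm (fun l => θ (i, l)) :=
        sum_le_sum fun l _ => abs_le_gnorm (fun l => θ (i, l)) l
    _ = Fintype.card κ * gnorm (fun l => θ (i, l)) := by simp

theorem groupNorm_le_of_card_support_le {θ : ι × κ → ℝ} {s : ℕ} {M : ℝ} (hM : 0 ≤ M)
    (hsupp : (univ.filter fun i => (fun l => θ (i, l)) ≠ 0).card ≤ s)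
    (hblock : ∀ i, gnorm (fun l => θ (i, l)) ≤ M) :
    groupNorm θ ≤ s * M := by
  have hzero : ∀ i, (fun l => θ (i, l)) = 0 → gnorm (fun l => θ (i, l)) = 0 := by
    intro i hi
    rw [hi]
    simp [gnorm]
  calc groupNorm θ = ∑ i ∈ univ.filter fun i => (fun l => θ (i, l)) ≠ 0,
        gnorm (fun l => θ (i, l)) := by
        rw [groupNorm, sum_filter_of_ne]
        exact fun i _ h hi => h (hzero i hi)
    _ ≤ (univ.filter fun i => (fun l => θ (i, l)) ≠ 0).card * M := by
        simpa using sum_le_sum fun i (_ : i ∈ univ.filter _) => hblock i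
    _ ≤ s * M := by gcongr

-- The crude blockwise bound `∑ₗ |θᵢₗ| ≤ card κ ‖θᵢ‖` is where the factor `d` in `λ` comes from.
theorem two_div_mul_dotProduct_le {T b : ℝ} (hT : 0 < T) (hb : 0 ≤ b) {g : ι × κ → ℝ}
    (hg : ∀ p, |g p| / T ≤ b) (δ : ι × κ → ℝ) :
    2 / T * (g ⬝ᵥ δ) ≤ 2 * Fintype.card κ * b * groupNorm δ := by
  have hg' : ∀ p, |g p| ≤ b * T := fun p => (div_le_iff₀ hT).mp (hg p)
  calc 2 / T * (g ⬝ᵥ δ) ≤ 2 / T * (b * T * ∑ p, |δ p|) := by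
        gcongr; exact dotProduct_le_mul_sum_abs hg' δ
    _ = 2 * b * ∑ p, |δ p| := by field_simp
    _ ≤ 2 * b * (Fintype.card κ * groupNorm δ) := by
        gcongr; exact sum_abs_le_card_mul_groupNorm δ
    _ = 2 * Fintype.card κ * b * groupNorm δ := by ring

theorem sqnorm_mulVec_sub_le_two_mul_groupNorm {T lam : ℝ} (hlam : 0 ≤ lam) (Y : n → ℝ)
    (Z : Matrix n (ι × κ) ℝ) (θhat θ₀ : ι × κ → ℝ)
    (hmin : 1 / T * sqnorm (Y - Z *ᵥ θhat) + lam * groupNorm θhat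
      ≤ 1 / T * sqnorm (Y - Z *ᵥ θ₀) + lam * groupNorm θ₀)
    (hcross : 2 / T * (Zᵀ *ᵥ (Y - Z *ᵥ θ₀) ⬝ᵥ (θhat - θ₀)) ≤ lam * groupNorm (θhat - θ₀)) :
    1 / T * sqnorm (Z *ᵥ (θhat - θ₀)) ≤ 2 * lam * groupNorm θ₀ := by
  set U := Y - Z *ᵥ θ₀
  have hresid : Y - Z *ᵥ θhat = U - Z *ᵥ (θhat - θ₀) := by
    simp only [U, Matrix.mulVec_sub]; abel
  have hdot : U ⬝ᵥ Z *ᵥ (θhat - θ₀) = Zᵀ *ᵥ U ⬝ᵥ (θhat - θ₀) := by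
    rw [Matrix.dotProduct_mulVec, Matrix.mulVec_transpose]
  rw [hresid, sqnorm_sub, hdot] at hmin
  have htri := mul_le_mul_of_nonneg_left (groupNorm_sub_le θhat θ₀) hlam
  linear_combination hmin + hcross + htri

end GroupLasso

theorem rate_nonneg (T : ℕ) : 0 ≤ rate T :=
  Real.rpow_nonneg (div_nonneg (Real.log_natCast_nonneg T) T.cast_nonneg) _

theorem theorem1_deterministic_core_general
    {N T d : ℕ} (hT : 2 ≤ T)
    (m0 : ℕ) (c0 Mθ : ℝ) (hc0 : 0 < c0) (hMθ : 0 < Mθ)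
    (Y : Fin N → ℝ) (Z : Matrix (Fin N) (Fin T × Fin d) ℝ)
    (θhat θzero : Fin T × Fin d → ℝ)
    (hsparse : ((Finset.univ : Finset (Fin T)).filter
        (fun i => (fun l => θzero (i, l)) ≠ 0)).card ≤ m0 + 1)
    (hbound : ∀ i : Fin T, gnorm (fun l => θzero (i, l)) ≤ Mθ)
    (hgood : ∀ p : Fin T × Fin d,
      |Z.transpose.mulVec (Y - Z.mulVec θzero) p| / T ≤ c0 * rate T)
    (hmin : ∀ θ : Fin T × Fin d → ℝ,
      (1 / (T : ℝ)) * sqnorm (Y - Z.mulVec θhat)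
          + lamT d c0 T * ∑ i : Fin T, gnorm (fun l => θhat (i, l))
        ≤ (1 / (T : ℝ)) * sqnorm (Y - Z.mulVec θ)
          + lamT d c0 T * ∑ i : Fin T, gnorm (fun l => θ (i, l))) :
    (1 / (T : ℝ)) * sqnorm (Z.mulVec (θhat - θzero))
      ≤ 4 * (d : ℝ) * c0 * rate T * (m0 + 1) * Mθ := by
  have hTpos : (0 : ℝ) < T := by exact_mod_cast (show 0 < T by omega)
  have hscore : 0 ≤ c0 * rate T := mul_nonneg hc0.le (rate_nonneg T)
  have hlam : 0 ≤ lamT d c0 T := mul_nonneg (by positivity) (rate_nonneg T)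
  have hcross := two_div_mul_dotProduct_le hTpos hscore hgood (θhat - θzero)
  rw [Fintype.card_fin, ← mul_assoc] at hcross
  have hpred := sqnorm_mulVec_sub_le_two_mul_groupNorm hlam Y Z θhat θzero (hmin θzero) hcross
  have hpen := groupNorm_le_of_card_support_le hMθ.le hsparse hbound
  calc 1 / (T : ℝ) * sqnorm (Z.mulVec (θhat - θzero))
        ≤ 2 * lamT d c0 T * groupNorm θzero := hpred
    _ ≤ 2 * lamT d c0 T * ((m0 + 1 : ℕ) * Mθ) := by gcongr
    _ = 4 * (d : ℝ) * c0 * rate T * (m0 + 1) * Mθ := by push_cast; unfold lamT; ring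

/-- Deterministic core of Theorem 1: prediction error bound for the group LASSO
on the good event where all entries of `ZᵀU/T` are small. -/
theorem theorem1_deterministic_core
    {N T d : ℕ} (hN : 0 < N) (hd : 0 < d) (hT : 2 ≤ T)
    (m0 : ℕ) (c0 Mθ : ℝ) (hc0 : 0 < c0) (hMθ : 0 < Mθ)
    (Y : Fin N → ℝ) (Z : Matrix (Fin N) (Fin T × Fin d) ℝ)
    (θhat θzero : Fin T × Fin d → ℝ)
    (hsparse : ((Finset.univ : Finset (Fin T)).filter
        (fun i => (fun l => θzero (i, l)) ≠ 0)).card ≤ m0 + 1)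
    (hbound : ∀ i : Fin T, gnorm (fun l => θzero (i, l)) ≤ Mθ)
    (hgood : ∀ p : Fin T × Fin d,
      |Z.transpose.mulVec (Y - Z.mulVec θzero) p| / T ≤ c0 * rate T)
    (hmin : ∀ θ : Fin T × Fin d → ℝ,
      (1 / (T : ℝ)) * sqnorm (Y - Z.mulVec θhat)
          + lamT d c0 T * ∑ i : Fin T, gnorm (fun l => θhat (i, l))
        ≤ (1 / (T : ℝ)) * sqnorm (Y - Z.mulVec θ)
          + lamT d c0 T * ∑ i : Fin T, gnorm (fun l => θ (i, l))) :
    (1 / (T : ℝ)) * sqnorm (Z.mulVec (θhat - θzero))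
      ≤ 4 * (d : ℝ) * c0 * rate T * (m0 + 1) * Mθ :=
  theorem1_deterministic_core_general hT m0 c0 Mθ hc0 hMθ Y Z θhat θzero hsparse hbound hgood hmin

end SB
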